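/- arXiv:2012.08122 — 4 statements merged into one kernel-verified Lean document; each statement's English description precedes it below -/
import Mathlib

section
/- Let p be a prime, l, m ≥ 1 integers with l ≤ m, and let A = Id + p^l·c̃ and B = Id + p^m·d̃ be invertible n×n matrices over ℤ/p^{l+m+1}. Then the commutator satisfies A·B·A⁻¹·B⁻¹ = Id + p^{l+m}·[c,d], where c, d denote the reductions of c̃, d̃ modulo p and [c,d] = cd - dc (the identity holding in matrices over ℤ/p^{l+m+1}, with p^{l+m}·[c,d] interpreted via arbitrary lifts of c, d). -/
/-!
Write `A = 1 + a • x` and `B = 1 + b • y` with central scalars `a = p^l`, `b = p^m`.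
Expanding, `A B - B A = a b [x, y]`, and multiplying `a b [x, y]` by `B A - 1` only produces
multiples of `a² b` or `a b²`, both divisible by `p^(l+m+1)`. Hence `A B = (1 + a b [x, y]) B A`,
which is the commutator identity once `A` and `B` are cancelled.
-/

theorem one_add_smul_mul_one_add_smul_eq_lie_mul_swap {R M : Type*} [CommRing R] [Ring M] [Algebra R M]
    {a b : R} (x y : M) (ha : a ^ 2 * b = 0) (hb : a * b ^ 2 = 0) :
    (1 + a • x) * (1 + b • y) = (1 + (a * b) • (x * y - y * x)) * ((1 + b • y) * (1 + a • x)) := by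
  have haba : a * b * a = 0 := by linear_combination ha
  have habb : a * b * b = 0 := by linear_combination hb
  have habab : a * b * (a * b) = 0 := by linear_combination b * ha
  simp only [mul_add, add_mul, mul_one, one_mul, smul_mul_smul_comm, smul_sub, sub_mul,
    haba, habb, habab, mul_comm b a, zero_smul]
  abel

theorem Matrix.mul_mul_nonsing_inv_mul_nonsing_inv_of_mul_eq {n R : Type*} [Fintype n]
    [DecidableEq n] [CommRing R] {A B C : Matrix n n R} (hA : IsUnit A) (hB : IsUnit B)
    (h : A * B = C * (B * A)) : A * B * A⁻¹ * B⁻¹ = C := by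
  rw [h, ← mul_assoc, mul_nonsing_inv_cancel_right _ _ ((isUnit_iff_isUnit_det A).mp hA),
    mul_nonsing_inv_cancel_right _ _ ((isUnit_iff_isUnit_det B).mp hB)]

theorem stmt_0_general (p : ℕ) (n l m : ℕ) (hl : 1 ≤ l) (hm : 1 ≤ m)
    (c d A B : Matrix (Fin n) (Fin n) (ZMod (p ^ (l + m + 1))))
    (hA : A = 1 + (p : ZMod (p ^ (l + m + 1))) ^ l • c)
    (hB : B = 1 + (p : ZMod (p ^ (l + m + 1))) ^ m • d)
    (hAu : IsUnit A) (hBu : IsUnit B) :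
    A * B * A⁻¹ * B⁻¹ =
      1 + (p : ZMod (p ^ (l + m + 1))) ^ (l + m) • (c * d - d * c) := by
  have hp : (p : ZMod (p ^ (l + m + 1))) ^ (l + m + 1) = 0 := by
    rw [← Nat.cast_pow, ZMod.natCast_self]
  refine Matrix.mul_mul_nonsing_inv_mul_nonsing_inv_of_mul_eq hAu hBu ?_
  rw [hA, hB, pow_add _ l m]
  refine one_add_smul_mul_one_add_smul_eq_lie_mul_swap c d ?_ ?_ <;>
    rw [← pow_mul, ← pow_add] <;> exact pow_eq_zero_of_le (by omega) hp

/-- commutator of `1 + p^l c` and `1 + p^m d` over `ℤ/p^{l+m+1}`. -/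
theorem stmt_0 (p : ℕ) [Fact p.Prime] (n l m : ℕ) (hl : 1 ≤ l) (hm : 1 ≤ m) (hlm : l ≤ m)
    (c d A B : Matrix (Fin n) (Fin n) (ZMod (p ^ (l + m + 1))))
    (hA : A = 1 + (p : ZMod (p ^ (l + m + 1))) ^ l • c)
    (hB : B = 1 + (p : ZMod (p ^ (l + m + 1))) ^ m • d)
    (hAu : IsUnit A) (hBu : IsUnit B) :
    A * B * A⁻¹ * B⁻¹ =
      1 + (p : ZMod (p ^ (l + m + 1))) ^ (l + m) • (c * d - d * c) :=
  stmt_0_general p n l m hl hm c d A B hA hB hAu hBu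
end

section
/- Define for 1 ≤ j the integers m_j = 2^{j+1} + ε_j where ε_j = 0 if j is odd and ε_j = 1 if j is even. If i ≠ j, k ≠ l, and m_i - m_j = m_k - m_l, then (i,j) = (k,l). -/
/-!
All four exponents `n + 1` are at least `2`, so reducing `m_i + m_l = m_k + m_j` modulo `4` forces
the parity corrections to cancel, leaving `2^(i+1) + 2^(l+1) = 2^(k+1) + 2^(j+1)`. A sum of two
powers of two determines its exponents up to order, and `i ≠ j` rules out the crossed matching.
-/

lemma le_of_two_pow_add_two_pow_eq {a b c d : ℕ} (hcd : c ≤ d)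
    (h : 2 ^ a + 2 ^ b = 2 ^ c + 2 ^ d) : b ≤ d := by
  have hlt : 2 ^ b < 2 ^ (d + 1) :=
    calc 2 ^ b < 2 ^ a + 2 ^ b := Nat.lt_add_of_pos_left (by positivity)
      _ = 2 ^ c + 2 ^ d := h
      _ ≤ 2 ^ d + 2 ^ d := by gcongr; norm_num
      _ = 2 ^ (d + 1) := by ring
  exact Nat.lt_succ_iff.mp ((Nat.pow_lt_pow_iff_right (by norm_num)).mp hlt)

lemma eq_and_eq_of_two_pow_add_two_pow_eq {a b c d : ℕ} (hab : a ≤ b) (hcd : c ≤ d)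
    (h : 2 ^ a + 2 ^ b = 2 ^ c + 2 ^ d) : a = c ∧ b = d := by
  obtain rfl : b = d :=
    le_antisymm (le_of_two_pow_add_two_pow_eq hcd h) (le_of_two_pow_add_two_pow_eq hab h.symm)
  exact ⟨Nat.pow_right_injective le_rfl (Nat.add_right_cancel h), rfl⟩

lemma two_pow_add_two_pow_eq_min_max (a b : ℕ) :
    2 ^ a + 2 ^ b = 2 ^ min a b + 2 ^ max a b := by
  rcases le_total a b with hab | hab <;> simp [hab, add_comm]

lemma two_pow_add_two_pow_inj {a b c d : ℕ} (h : 2 ^ a + 2 ^ b = 2 ^ c + 2 ^ d) :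
    (a = c ∧ b = d) ∨ (a = d ∧ b = c) := by
  have := eq_and_eq_of_two_pow_add_two_pow_eq min_le_max min_le_max
    ((two_pow_add_two_pow_eq_min_max a b).symm.trans (h.trans (two_pow_add_two_pow_eq_min_max c d)))
  omega

theorem stmt_5_general (m : ℕ → ℤ) (hm : ∀ j, m j = 2 ^ (j + 1) + if Odd j then 0 else 1)
    (i j k l : ℕ) (hi : 1 ≤ i) (hj : 1 ≤ j) (hk : 1 ≤ k) (hl : 1 ≤ l)
    (hij : i ≠ j) (h : m i - m j = m k - m l) :
    (i, j) = (k, l) := by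
  have four_dvd : ∀ n, 1 ≤ n → (4 : ℤ) ∣ 2 ^ (n + 1) := fun n hn => by
    simpa using pow_dvd_pow (2 : ℤ) (by omega : 2 ≤ n + 1)
  have ε_bounds : ∀ n : ℕ, (0 : ℤ) ≤ (if Odd n then 0 else 1) ∧ (if Odd n then 0 else 1) ≤ 1 :=
    fun n => by split_ifs <;> norm_num
  rw [hm, hm, hm, hm] at h
  have hpow : (2 : ℤ) ^ (i + 1) + 2 ^ (l + 1) = 2 ^ (k + 1) + 2 ^ (j + 1) := by
    have := four_dvd i hi; have := four_dvd j hj; have := four_dvd k hk; have := four_dvd l hl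
    have := ε_bounds i; have := ε_bounds j; have := ε_bounds k; have := ε_bounds l
    omega
  have := two_pow_add_two_pow_inj (by exact_mod_cast hpow)
  simp only [Prod.mk.injEq]
  omega

/-- with `m_j = 2^{j+1} + ε_j` (`ε_j = 0` for odd `j`, `1` for even `j`),
if `i ≠ j`, `k ≠ l` are positive and `m_i - m_j = m_k - m_l`, then `(i,j) = (k,l)`. -/
theorem stmt_5 (m : ℕ → ℤ) (hm : ∀ j, m j = 2 ^ (j + 1) + if Odd j then 0 else 1)
    (i j k l : ℕ) (hi : 1 ≤ i) (hj : 1 ≤ j) (hk : 1 ≤ k) (hl : 1 ≤ l)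
    (hij : i ≠ j) (hkl : k ≠ l) (h : m i - m j = m k - m l) :
    (i, j) = (k, l) :=
  stmt_5_general m hm i j k l hi hj hk hl hij h
end

section
/- Let p be an odd prime and ρ : G → GL_n(ℤ_p) a continuous representation of a profinite group G, with Φ_m(ρ) the filtration subquotients viewed inside M_n(𝔽_p). If Φ_m(ρ) contains sl_n(𝔽_p) for some m ≥ 1, then Φ_k(ρ) contains sl_n(𝔽_p) for all k ≥ m. -/
open Matrix

/-- Entrywise reduction of `p`-adic integer matrices modulo `p^m`. -/
noncomputable def red (p : ℕ) [Fact p.Prime] (n m : ℕ) :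
    Matrix (Fin n) (Fin n) ℤ_[p] →+* Matrix (Fin n) (Fin n) (ZMod (p ^ m)) :=
  (PadicInt.toZModPow m).mapMatrix

/-- Entrywise lift of a matrix over `𝔽_p` to a matrix over `ℤ/p^m` via `ZMod.val`. -/
def mlift (p : ℕ) {n : ℕ} (m : ℕ) (X : Matrix (Fin n) (Fin n) (ZMod p)) :
    Matrix (Fin n) (Fin n) (ZMod (p ^ m)) :=
  X.map fun x => (x.val : ZMod (p ^ m))

/-- `Φ_m(ρ)`: the image of `ker ρ_m` under `ρ_{m+1}`, viewed in `M_n(𝔽_p)`. -/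
noncomputable def Phi (p : ℕ) [Fact p.Prime] {n : ℕ} {G : Type*} [Group G]
    (ρ : G →* GL (Fin n) ℤ_[p]) (m : ℕ) : Set (Matrix (Fin n) (Fin n) (ZMod p)) :=
  {X | ∃ g : G, red p n m (ρ g).val = 1 ∧
    red p n (m + 1) (ρ g).val = 1 + (p : ZMod (p ^ (m + 1))) ^ m • mlift p (m + 1) X}

/-!
If `ρ g = 1 + p^m (X + p W)` with `m ≥ 1`, the binomial theorem gives
`(ρ g)^p = 1 + p^(m+1) (X + p W')`: for `k ≥ 2` the term `C(p,k) p^(mk)` is divisible by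
`p^(m+2)`, the only delicate case `m = 1, k = 2` using that `p ∣ C(p,2)` for odd `p`.
Hence `Φ_m(ρ) ⊆ Φ_{m+1}(ρ)`, witnessed by `g^p`, and the quotients increase from `m` on.
-/

theorem Odd.pow_dvd_pow_mul_choose {p : ℕ} (hp : Odd p) {m k : ℕ} (hm : 1 ≤ m)
    (hk : 2 ≤ k) :
    p ^ (m + 2) ∣ p ^ (m * k) * p.choose k := by
  by_cases hmk : m + 2 ≤ m * k
  · exact (pow_dvd_pow p hmk).mul_right _
  obtain rfl : m = 1 := by nlinarith
  obtain rfl : k = 2 := by omega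
  obtain ⟨t, rfl⟩ := hp
  have hchoose : (2 * t + 1).choose 2 = (2 * t + 1) * t := by
    rw [Nat.choose_two_right, Nat.add_sub_cancel, mul_left_comm, Nat.mul_div_cancel_left _ two_pos]
  rw [hchoose]
  exact ⟨t, by ring⟩

theorem Odd.exists_one_add_pow_nsmul_pow {R : Type*} [Ring R] {p : ℕ} (hp : Odd p) {m : ℕ}
    (hm : 1 ≤ m) (x : R) :
    ∃ y : R, (1 + p ^ m • x) ^ p = 1 + p ^ (m + 1) • (x + p • y) := by
  set f : ℕ → R := fun k => (p ^ (m * k) * p.choose k) • x ^ k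
  have hbinom : (1 + p ^ m • x) ^ p = ∑ k ∈ Finset.range (p + 1), f k := by
    rw [add_comm, (Commute.one_right _).add_pow]
    refine Finset.sum_congr rfl fun k _ => ?_
    rw [one_pow, mul_one, ← nsmul_eq_mul', smul_pow, ← pow_mul, smul_smul, mul_comm]
  set y := ∑ k ∈ Finset.range (p - 1),
    (p ^ (m * (k + 2)) * p.choose (k + 2) / p ^ (m + 2)) • x ^ (k + 2)
  have htail : ∑ k ∈ Finset.range (p - 1), f (k + 1 + 1) = p ^ (m + 1) • p • y := by
    rw [Finset.smul_sum, Finset.smul_sum]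
    refine Finset.sum_congr rfl fun k _ => ?_
    rw [smul_smul, smul_smul, ← pow_succ,
      Nat.mul_div_cancel' (hp.pow_dvd_pow_mul_choose hm (by omega))]
  have hp1 : p + 1 = p - 1 + 1 + 1 := by have := hp.pos; omega
  have hf0 : f 0 = 1 := by simp [f]
  have hf1 : f 1 = p ^ (m + 1) • x := by simp [f, pow_succ]
  refine ⟨y, ?_⟩
  rw [hbinom, hp1, Finset.sum_range_succ', Finset.sum_range_succ', htail, hf0, hf1, smul_add]
  abel

section Reduction

variable {p : ℕ} [Fact p.Prime] {n : ℕ}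

noncomputable def padicLift (X : Matrix (Fin n) (Fin n) (ZMod p)) :
    Matrix (Fin n) (Fin n) ℤ_[p] :=
  X.map fun x => (x.val : ℤ_[p])

theorem red_padicLift (s : ℕ) (X : Matrix (Fin n) (Fin n) (ZMod p)) :
    red p n s (padicLift X) = mlift p s X := by
  ext i j
  simp only [red, padicLift, mlift, RingHom.mapMatrix_apply, Matrix.map_apply, map_natCast]

theorem red_pow_nsmul (s : ℕ) (M : Matrix (Fin n) (Fin n) ℤ_[p]) :
    red p n s (p ^ s • M) = 0 := by
  rw [map_nsmul, ← Nat.cast_smul_eq_nsmul (ZMod (p ^ s)), ZMod.natCast_self, zero_smul]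

theorem exists_eq_pow_nsmul_of_red_eq_zero {s : ℕ} {M : Matrix (Fin n) (Fin n) ℤ_[p]}
    (hM : red p n s M = 0) : ∃ W, M = p ^ s • W := by
  have hdvd (i j : Fin n) : (p : ℤ_[p]) ^ s ∣ M i j := by
    rw [← Ideal.mem_span_singleton, ← PadicInt.ker_toZModPow, RingHom.mem_ker]
    exact congrFun (congrFun hM i) j
  choose W hW using hdvd
  exact ⟨Matrix.of W, by ext i j; simp [hW]⟩

theorem mem_Phi_iff {G : Type*} [Group G] {ρ : G →* GL (Fin n) ℤ_[p]} {m : ℕ}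
    {X : Matrix (Fin n) (Fin n) (ZMod p)} :
    X ∈ Phi p ρ m ↔
      ∃ g W, (ρ g : Matrix (Fin n) (Fin n) ℤ_[p]) = 1 + p ^ m • (padicLift X + p • W) := by
  simp only [Phi, Set.mem_ofPred_eq, ← Nat.cast_pow, Nat.cast_smul_eq_nsmul]
  constructor
  · rintro ⟨g, -, hg⟩
    have hker : red p n (m + 1)
        ((ρ g : Matrix (Fin n) (Fin n) ℤ_[p]) - (1 + p ^ m • padicLift X)) = 0 := by
      rw [map_sub, map_add, map_one, map_nsmul, red_padicLift, hg, sub_self]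
    obtain ⟨W, hW⟩ := exists_eq_pow_nsmul_of_red_eq_zero hker
    refine ⟨g, W, ?_⟩
    rw [smul_add, smul_smul, ← pow_succ, ← add_assoc, ← hW, add_sub_cancel]
  · rintro ⟨g, W, hg⟩
    refine ⟨g, ?_, ?_⟩
    · rw [hg, map_add, red_pow_nsmul, map_one, add_zero]
    · rw [hg, smul_add, smul_smul, ← pow_succ, map_add, map_add, red_pow_nsmul, map_nsmul,
        red_padicLift, map_one, add_zero]

theorem Phi_subset_Phi_succ (hp : Odd p) {G : Type*} [Group G] (ρ : G →* GL (Fin n) ℤ_[p])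
    {m : ℕ} (hm : 1 ≤ m) : Phi p ρ m ⊆ Phi p ρ (m + 1) := by
  intro X hX
  obtain ⟨g, W, hg⟩ := mem_Phi_iff.mp hX
  obtain ⟨y, hy⟩ := hp.exists_one_add_pow_nsmul_pow hm (padicLift X + p • W)
  refine mem_Phi_iff.mpr ⟨g ^ p, W + y, ?_⟩
  rw [map_pow, Units.val_pow_eq_pow_val, hg, hy, add_assoc, ← smul_add]

theorem Phi_subset_Phi_of_le (hp : Odd p) {G : Type*} [Group G] (ρ : G →* GL (Fin n) ℤ_[p])
    {m k : ℕ} (hm : 1 ≤ m) (hmk : m ≤ k) : Phi p ρ m ⊆ Phi p ρ k := by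
  induction k, hmk using Nat.le_induction with
  | base => exact subset_rfl
  | succ k hmk ih => exact Set.Subset.trans ih (Phi_subset_Phi_succ hp ρ (hm.trans hmk))

end Reduction

theorem stmt_10_general (p : ℕ) [Fact p.Prime] (hp : Odd p) {n : ℕ} {G : Type*} [Group G]
    (ρ : G →* GL (Fin n) ℤ_[p])
    (m : ℕ) (hm : 1 ≤ m)
    (hsl : ∀ X : Matrix (Fin n) (Fin n) (ZMod p), X.trace = 0 → X ∈ Phi p ρ m) :
    ∀ k, m ≤ k → ∀ X : Matrix (Fin n) (Fin n) (ZMod p), X.trace = 0 → X ∈ Phi p ρ k :=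
  fun _ hmk X hX => Phi_subset_Phi_of_le hp ρ hm hmk (hsl X hX)

/-- if `Φ_m(ρ)` contains `sl_n(𝔽_p)` then so does `Φ_k(ρ)` for all `k ≥ m`. -/
theorem stmt_10 (p : ℕ) [Fact p.Prime] (hp : Odd p) {n : ℕ} {G : Type*} [Group G]
    [TopologicalSpace G] [IsTopologicalGroup G] [CompactSpace G] [TotallyDisconnectedSpace G]
    (ρ : G →* GL (Fin n) ℤ_[p]) (hρ : Continuous fun g => ρ g)
    (m : ℕ) (hm : 1 ≤ m)
    (hsl : ∀ X : Matrix (Fin n) (Fin n) (ZMod p), X.trace = 0 → X ∈ Phi p ρ m) :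
    ∀ k, m ≤ k → ∀ X : Matrix (Fin n) (Fin n) (ZMod p), X.trace = 0 → X ∈ Phi p ρ k :=
  stmt_10_general p hp ρ m hm hsl
end

section
/- Let p be an odd prime and n ≥ 2, and suppose Φ₁ ⊆ M_n(𝔽_p) is a subspace with the property that there are subspaces Φ₂, Φ₃, Φ₄ ⊆ M_n(𝔽_p) satisfying [Φ_l, Φ_m] ⊆ Φ_{l+m} whenever l+m ≤ 4. If Φ₁ contains a diagonal matrix w = Σ aᵢe_{i,i} with a₁,…,aₙ pairwise distinct and contains e_{i,j} for all (i,j) with i+j odd, then Φ₄ contains sl_n(𝔽_p). -/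
/-!
Bracketing with `w = diagonal a` scales `e_{i,j}` by `a i - a j ≠ 0`, so an off-diagonal
`e_{i,j}` in `Φ k` lies in `Φ (k + 1)`. This puts the odd-parity `e_{i,j}` in `Φ 2`; the
even-parity ones are `[e_{i,l}, e_{l,j}]` for an `l` of the other parity. Two more steps put all
off-diagonal `e_{i,j}` in `Φ 4`, and `[e_{i,j}, e_{j,i}] = e_{i,i} - e_{j,j}` with both factors
in `Φ 2`; together these span `sl_n`.
-/

namespace Matrix

variable {n K : Type*} [Fintype n] [DecidableEq n]

theorem diagonal_mul_single_sub_single_mul_diagonal [CommRing K] (a : n → K) (i j : n) (c : K) :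
    diagonal a * single i j c - single i j c * diagonal a = (a i - a j) • single i j c := by
  ext k l
  by_cases hki : i = k <;> by_cases hlj : j = l <;> simp [single, hki, hlj]; ring

theorem single_mul_single_sub_single_mul_single_of_ne [Ring K] {i j : n} (k : n)
    (hij : i ≠ j) : single i k (1 : K) * single k j 1 - single k j 1 * single i k 1 =
      single i j 1 := by
  rw [single_mul_single_same, single_mul_single_of_ne (c := (1 : K)) k j i hij.symm, mul_one,
    sub_zero]

theorem single_mul_single_sub_single_mul_single_swap [Ring K] (i j : n) :
    single i j (1 : K) * single j i 1 - single j i 1 * single i j 1 =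
      single i i 1 - single j j 1 := by
  rw [single_mul_single_same, single_mul_single_same, mul_one]

theorem single_mem_of_diagonal_commutator_mem [Field K] {S : Submodule K (Matrix n n K)}
    {a : n → K} {i j : n} (hij : a i ≠ a j) (c : K)
    (h : diagonal a * single i j c - single i j c * diagonal a ∈ S) : single i j c ∈ S := by
  rw [diagonal_mul_single_sub_single_mul_diagonal] at h
  have := S.smul_mem (a i - a j)⁻¹ h
  rwa [smul_smul, inv_mul_cancel₀ (sub_ne_zero.mpr hij), one_smul] at this

theorem mem_of_trace_eq_zero [Ring K] {S : Submodule K (Matrix n n K)}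
    (hoff : ∀ i j, i ≠ j → single i j (1 : K) ∈ S)
    (hdiag : ∀ i j, single i i (1 : K) - single j j 1 ∈ S)
    {X : Matrix n n K} (hX : X.trace = 0) : X ∈ S := by
  cases isEmpty_or_nonempty n with
  | inl _ => simp [Subsingleton.elim X 0]
  | inr h =>
    obtain ⟨i₀⟩ := h
    -- subtracting `trace X • single i₀ i₀ 1 = 0` turns each diagonal term into a multiple
    -- of `single i i 1 - single i₀ i₀ 1`
    have hsum : X = ∑ i, ∑ j, X i j • (single i j 1 - if i = j then single i₀ i₀ 1 else 0) := by
      simp only [smul_sub, Finset.sum_sub_distrib, smul_ite, smul_zero, Finset.sum_ite_eq,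
        Finset.mem_univ, if_true, ← Finset.sum_smul]
      have htr : ∑ i, X i i = 0 := hX
      rw [htr, zero_smul, sub_zero]
      simpa only [smul_single, smul_eq_mul, mul_one] using X.matrix_eq_sum_single
    rw [hsum]
    refine Submodule.sum_mem _ fun i _ => Submodule.sum_mem _ fun j _ => S.smul_mem _ ?_
    by_cases hij : i = j
    · subst hij; simpa using hdiag i i₀
    · simpa [hij] using hoff i j hij

end Matrix

theorem Fin.exists_odd_add_and_odd_add {n : ℕ} {i j : Fin n} (hij : i ≠ j)
    (h : Even (i.val + j.val)) : ∃ l : Fin n, Odd (i.val + l.val) ∧ Odd (l.val + j.val) := by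
  have hval : i.val ≠ j.val := Fin.val_ne_of_ne hij
  rw [Nat.even_iff] at h
  -- `i ≠ j` of equal parity forces `n ≥ 3`, so both `0` and `1` are indices
  refine ⟨⟨(i.val + 1) % 2, by omega⟩, ?_, ?_⟩ <;> simp only [Nat.odd_iff] <;> omega

open Matrix in
theorem stmt_11_general (p : ℕ) [Fact p.Prime] (n : ℕ)
    (Φ : ℕ → Submodule (ZMod p) (Matrix (Fin n) (Fin n) (ZMod p)))
    (hbracket : ∀ l m : ℕ, 1 ≤ l → 1 ≤ m → l + m ≤ 4 →
      ∀ x ∈ Φ l, ∀ y ∈ Φ m, x * y - y * x ∈ Φ (l + m))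
    (a : Fin n → ZMod p) (ha : Function.Injective a)
    (hw : Matrix.diagonal a ∈ Φ 1)
    (he : ∀ i j : Fin n, Odd (i.val + j.val) → Matrix.single i j (1 : ZMod p) ∈ Φ 1) :
    ∀ X : Matrix (Fin n) (Fin n) (ZMod p), X.trace = 0 → X ∈ Φ 4 := by
  intro X hX
  have mem_succ : ∀ k, 1 ≤ k → k ≤ 3 → ∀ i j, i ≠ j →
      single i j (1 : ZMod p) ∈ Φ k → single i j 1 ∈ Φ (k + 1) := fun k hk₁ hk₃ i j hij hk =>
    add_comm 1 k ▸ single_mem_of_diagonal_commutator_mem (ha.ne hij) 1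
      (hbracket 1 k le_rfl hk₁ (by omega) _ hw _ hk)
  have mem_two : ∀ i j, i ≠ j → single i j (1 : ZMod p) ∈ Φ 2 := by
    intro i j hij
    rcases Nat.even_or_odd (i.val + j.val) with heven | hodd
    · obtain ⟨l, hil, hlj⟩ := Fin.exists_odd_add_and_odd_add hij heven
      rw [← single_mul_single_sub_single_mul_single_of_ne l hij]
      exact hbracket 1 1 le_rfl le_rfl (by omega) _ (he i l hil) _ (he l j hlj)
    · exact mem_succ 1 le_rfl (by omega) i j hij (he i j hodd)
  refine mem_of_trace_eq_zero (fun i j hij => ?_) (fun i j => ?_) hX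
  · exact mem_succ 3 (by omega) le_rfl i j hij (mem_succ 2 (by omega) (by omega) i j hij
      (mem_two i j hij))
  · by_cases hij : i = j
    · simp [hij]
    · rw [← single_mul_single_sub_single_mul_single_swap]
      exact hbracket 2 2 (by omega) (by omega) le_rfl _ (mem_two i j hij) _
        (mem_two j i (Ne.symm hij))

/-- if subspaces `Φ₁, …, Φ₄ ⊆ M_n(𝔽_p)` satisfy `[Φ_l, Φ_m] ⊆ Φ_{l+m}` for
`l + m ≤ 4`, and `Φ₁` contains a diagonal matrix with pairwise distinct entries as well as
all `e_{i,j}` with `i + j` odd, then `Φ₄` contains `sl_n(𝔽_p)`. -/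
theorem stmt_11 (p : ℕ) [Fact p.Prime] (hp : Odd p) (n : ℕ) (hn : 2 ≤ n)
    (Φ : ℕ → Submodule (ZMod p) (Matrix (Fin n) (Fin n) (ZMod p)))
    (hbracket : ∀ l m : ℕ, 1 ≤ l → 1 ≤ m → l + m ≤ 4 →
      ∀ x ∈ Φ l, ∀ y ∈ Φ m, x * y - y * x ∈ Φ (l + m))
    (a : Fin n → ZMod p) (ha : Function.Injective a)
    (hw : Matrix.diagonal a ∈ Φ 1)
    (he : ∀ i j : Fin n, Odd (i.val + j.val) → Matrix.single i j (1 : ZMod p) ∈ Φ 1) :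
    ∀ X : Matrix (Fin n) (Fin n) (ZMod p), X.trace = 0 → X ∈ Φ 4 :=
  stmt_11_general p n Φ hbracket a ha hw he
end
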